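/- For every natural number n ≥ 1, the set WAM1 of the cylinder, A_n = {(r_i cos θ_j, r_i sin θ_j, z_k)} with radii r_i = cos(iπ/n) for 0 ≤ i ≤ n, angles θ_j = jπ/(n+2) for 0 ≤ j ≤ n+1 when n is even and θ_j = jπ/(n+1) for 0 ≤ j ≤ n when n is odd, and heights z_k = cos(kπ/n) for 0 ≤ k ≤ n, has cardinality exactly (n+1)³ (as a set of distinct points of ℝ³), both for n even and for n odd. -/

import Mathlib

/-! Signed polar coordinates `(r, θ) ↦ (r cos θ, r sin θ)` with `r ≠ 0` and `θ ∈ [0, π)` are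
injective. The radii `cos (iπ/n)` are `n + 1` distinct numbers and all angles lie in `[0, π)`, so
distinct index triples give distinct points, except that for even `n` the radius `cos (π/2) = 0`
sends every angle to the axis of the cylinder. On each of the `n + 1` levels this leaves
`n (n + 2) + 1 = (n + 1)²` points of the disk. -/

/-- The mesh WAM1 of degree `n` of the rectangular cylinder `D × [-1,1]`:
points `(r_i cos θ_j, r_i sin θ_j, z_k)` with `r_i = cos(iπ/n)`, `0 ≤ i ≤ n`;
`θ_j = jπ/(n+2)`, `0 ≤ j ≤ n+1` when `n` is even and `θ_j = jπ/(n+1)`, `0 ≤ j ≤ n`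
when `n` is odd; `z_k = cos(kπ/n)`, `0 ≤ k ≤ n`. -/
noncomputable def WAM1 (n : ℕ) : Finset (ℝ × ℝ × ℝ) :=
  (Finset.range (n + 1) ×ˢ
      Finset.range (if Even n then n + 2 else n + 1) ×ˢ Finset.range (n + 1)).image
    (fun ijk : ℕ × ℕ × ℕ =>
      let θ : ℝ := if Even n then ijk.2.1 * Real.pi / (n + 2)
        else ijk.2.1 * Real.pi / (n + 1)
      (Real.cos (ijk.1 * Real.pi / n) * Real.cos θ,
        Real.cos (ijk.1 * Real.pi / n) * Real.sin θ,
        Real.cos (ijk.2.2 * Real.pi / n)))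

open Real Finset

noncomputable def signedPolar (p : ℝ × ℝ) : ℝ × ℝ := (p.1 * cos p.2, p.1 * sin p.2)

theorem signedPolar_eq_zero_iff {p : ℝ × ℝ} : signedPolar p = 0 ↔ p.1 = 0 := by
  refine ⟨fun h => ?_, fun h => by simp [signedPolar, h]⟩
  obtain ⟨hc, hs⟩ := Prod.mk_eq_zero.1 h
  have hsq : p.1 ^ 2 = 0 := by
    linear_combination
      (-p.1 ^ 2) * sin_sq_add_cos_sq p.2 + p.1 * sin p.2 * hs + p.1 * cos p.2 * hc
  exact pow_eq_zero_iff two_ne_zero |>.1 hsq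

theorem signedPolar_injOn : Set.InjOn signedPolar ({0}ᶜ ×ˢ Set.Ico 0 π) := by
  rintro ⟨r, θ⟩ ⟨hr, hθ⟩ ⟨r', θ'⟩ ⟨-, hθ'⟩ h
  obtain ⟨hc, hs⟩ := Prod.ext_iff.1 h
  simp only [signedPolar] at hr hθ hθ' hc hs
  have hsq : r ^ 2 = r' ^ 2 := by
    linear_combination (-r ^ 2) * sin_sq_add_cos_sq θ + r' ^ 2 * sin_sq_add_cos_sq θ' +
      (r * cos θ + r' * cos θ') * hc + (r * sin θ + r' * sin θ') * hs
  rcases sq_eq_sq_iff_eq_or_eq_neg.1 hsq with rfl | rfl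
  · have hcos : cos θ = cos θ' := mul_left_cancel₀ hr hc
    rw [injOn_cos (Set.Ico_subset_Icc_self hθ) (Set.Ico_subset_Icc_self hθ') hcos]
  · -- the sines are nonnegative on `[0, π)`, so `sin θ = -sin θ'` forces `θ = θ' = 0`
    have hsum : sin θ + sin θ' = 0 := by
      have hr' : r' ≠ 0 := by simpa using hr
      exact mul_left_cancel₀ hr' (by linear_combination -hs)
    have zero_of_sin {φ : ℝ} (hφ : φ ∈ Set.Ico 0 π) (h : sin φ = 0) : φ = 0 :=
      (sin_eq_zero_iff_of_lt_of_lt (by linarith [hφ.1, pi_pos]) hφ.2).1 h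
    have hsθ := sin_nonneg_of_mem_Icc (Set.Ico_subset_Icc_self hθ)
    have hsθ' := sin_nonneg_of_mem_Icc (Set.Ico_subset_Icc_self hθ')
    obtain rfl := zero_of_sin hθ (by linarith)
    obtain rfl := zero_of_sin hθ' (by linarith)
    simp only [cos_zero, mul_one] at hc
    exact absurd (by linarith : -r' = 0) hr

theorem card_image_signedPolar_of_zero_notMem {R Θ : Finset ℝ} (hR : 0 ∉ R)
    (hΘ : (Θ : Set ℝ) ⊆ Set.Ico 0 π) : ((R ×ˢ Θ).image signedPolar).card = R.card * Θ.card := by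
  rw [card_image_of_injOn, card_product]
  refine signedPolar_injOn.mono ?_
  rw [coe_product]
  exact Set.prod_mono (fun r hr h0 => hR (h0 ▸ hr)) hΘ

theorem card_image_signedPolar_of_zero_mem {R Θ : Finset ℝ} (hR : 0 ∈ R)
    (hΘ : (Θ : Set ℝ) ⊆ Set.Ico 0 π) (hΘne : Θ.Nonempty) :
    ((R ×ˢ Θ).image signedPolar).card = (R.erase 0).card * Θ.card + 1 := by
  have himage : (R ×ˢ Θ).image signedPolar = insert 0 (((R.erase 0) ×ˢ Θ).image signedPolar) := by
    ext x
    simp only [mem_image, mem_insert, mem_product, mem_erase]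
    constructor
    · rintro ⟨⟨r, θ⟩, ⟨hr, hθ⟩, rfl⟩
      by_cases h0 : r = 0
      · exact Or.inl (signedPolar_eq_zero_iff.2 h0)
      · exact Or.inr ⟨(r, θ), ⟨⟨h0, hr⟩, hθ⟩, rfl⟩
    · rintro (rfl | ⟨p, ⟨⟨-, hp⟩, hθ⟩, rfl⟩)
      · obtain ⟨θ, hθ⟩ := hΘne
        exact ⟨(0, θ), ⟨hR, hθ⟩, signedPolar_eq_zero_iff.2 rfl⟩
      · exact ⟨p, ⟨hp, hθ⟩, rfl⟩
  rw [himage, card_insert_of_notMem, card_image_signedPolar_of_zero_notMem (notMem_erase 0 R) hΘ]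
  simp only [mem_image, mem_product, mem_erase, signedPolar_eq_zero_iff, not_exists, not_and]
  exact fun p ⟨⟨hp, _⟩, _⟩ => hp

theorem natCast_mul_pi_div_injective {n : ℕ} (hn : n ≠ 0) :
    Function.Injective fun i : ℕ => (i : ℝ) * π / n := fun _ _ h =>
  Nat.cast_injective (mul_left_injective₀ pi_ne_zero ((div_left_inj' (Nat.cast_ne_zero.2 hn)).1 h))

theorem natCast_mul_pi_div_mem_Icc {i n : ℕ} (h : i ≤ n) : (i : ℝ) * π / n ∈ Set.Icc 0 π := by
  rw [mul_div_right_comm]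
  exact ⟨by positivity, mul_le_of_le_one_left pi_pos.le
    (div_le_one_of_le₀ (by exact_mod_cast h) (Nat.cast_nonneg n))⟩

theorem natCast_mul_pi_div_mem_Ico {i n : ℕ} (h : i < n) : (i : ℝ) * π / n ∈ Set.Ico 0 π := by
  rw [mul_div_right_comm]
  exact ⟨by positivity, mul_lt_of_lt_one_left pi_pos
    ((div_lt_one (by exact_mod_cast Nat.zero_lt_of_lt h)).2 (by exact_mod_cast h))⟩

noncomputable def chebyshevLobattoNodes (n : ℕ) : Finset ℝ :=
  (range (n + 1)).image fun i : ℕ => cos (i * π / n)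

theorem card_chebyshevLobattoNodes {n : ℕ} (hn : n ≠ 0) :
    (chebyshevLobattoNodes n).card = n + 1 := by
  rw [chebyshevLobattoNodes, card_image_of_injOn, card_range]
  intro i hi j hj h
  have hi' := natCast_mul_pi_div_mem_Icc (n := n) (Nat.lt_succ_iff.1 (mem_range.1 hi))
  have hj' := natCast_mul_pi_div_mem_Icc (n := n) (Nat.lt_succ_iff.1 (mem_range.1 hj))
  exact natCast_mul_pi_div_injective hn (injOn_cos hi' hj' h)

theorem zero_mem_chebyshevLobattoNodes_iff {n : ℕ} (hn : n ≠ 0) :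
    0 ∈ chebyshevLobattoNodes n ↔ Even n := by
  simp only [chebyshevLobattoNodes, mem_image, mem_range]
  constructor
  · rintro ⟨i, hi, h⟩
    have hhalf : π / 2 ∈ Set.Icc 0 π := ⟨by positivity, by linarith [pi_pos]⟩
    have hangle : (i : ℝ) * π / n = π / 2 := injOn_cos
      (natCast_mul_pi_div_mem_Icc (Nat.lt_succ_iff.1 hi)) hhalf (h.trans cos_pi_div_two.symm)
    refine ⟨i, Nat.cast_injective (R := ℝ) ?_⟩
    field_simp at hangle
    push_cast
    linarith
  · rintro ⟨i, rfl⟩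
    have hi : (i : ℝ) ≠ 0 := by exact_mod_cast (by omega : i ≠ 0)
    refine ⟨i, by omega, ?_⟩
    rw [show (i : ℝ) * π / ↑(i + i) = π / 2 by push_cast; field_simp; ring, cos_pi_div_two]

noncomputable def uniformAngles (m : ℕ) : Finset ℝ :=
  (range m).image fun j : ℕ => j * π / m

theorem card_uniformAngles (m : ℕ) : (uniformAngles m).card = m := by
  rw [uniformAngles, card_image_of_injOn, card_range]
  intro i hi _ _ h
  exact natCast_mul_pi_div_injective (Nat.ne_zero_of_lt (mem_range.1 hi)) h

theorem coe_uniformAngles_subset (m : ℕ) : (uniformAngles m : Set ℝ) ⊆ Set.Ico 0 π := by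
  simp only [uniformAngles, coe_image, coe_range, Set.image_subset_iff]
  exact fun j hj => natCast_mul_pi_div_mem_Ico hj

theorem uniformAngles_nonempty {m : ℕ} (hm : m ≠ 0) : (uniformAngles m).Nonempty := by
  simpa [uniformAngles] using hm

theorem WAM1_eq_product (n : ℕ) :
    WAM1 n = (((chebyshevLobattoNodes n ×ˢ uniformAngles (if Even n then n + 2 else n + 1)).image
      signedPolar) ×ˢ chebyshevLobattoNodes n).map (Equiv.prodAssoc ℝ ℝ ℝ).toEmbedding := by
  ext ⟨x, y, z⟩
  split_ifs with he <;>
  · simp only [WAM1, he, ↓reduceIte, chebyshevLobattoNodes, uniformAngles, signedPolar,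
      mem_map_equiv, Equiv.prodAssoc_symm_apply, mem_image, mem_product, mem_range,
      Prod.mk.injEq, Prod.exists, Nat.cast_add, Nat.cast_one, Nat.cast_ofNat]
    aesop

/-- For every `n ≥ 1`, the mesh WAM1 of the cylinder has exactly `(n+1)³` distinct
points, both for `n` even and for `n` odd. -/
theorem WAM1_card (n : ℕ) (hn : 1 ≤ n) : (WAM1 n).card = (n + 1) ^ 3 := by
  have hn0 : n ≠ 0 := by omega
  have hzero := zero_mem_chebyshevLobattoNodes_iff hn0
  rw [WAM1_eq_product, card_map, card_product, card_chebyshevLobattoNodes hn0]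
  split_ifs with he
  · rw [card_image_signedPolar_of_zero_mem (hzero.2 he) (coe_uniformAngles_subset _)
        (uniformAngles_nonempty (by omega)), card_erase_of_mem (hzero.2 he),
      card_chebyshevLobattoNodes hn0, card_uniformAngles, Nat.add_sub_cancel]
    ring
  · rw [card_image_signedPolar_of_zero_notMem (mt hzero.1 he) (coe_uniformAngles_subset _),
      card_chebyshevLobattoNodes hn0, card_uniformAngles]
    ring
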